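/- arXiv:2102.09020 — 4 statements merged into one kernel-verified Lean document; each statement's English description precedes it below -/
import Mathlib

section
/- Let D_n be the determinant of the n×n tridiagonal matrix with diagonal entries (d_k + c_k), superdiagonal entries -c_k (in row k), and subdiagonal entries -d_{k+1} (in row k+1). Then D_n = Σ_{j=0}^{n} (d_1 ⋯ d_j)(c_{j+1} ⋯ c_n), i.e., the sum over j of the product of the first j of the d's times the last n-j of the c's. -/
/-!
Expanding along the last row shows that the determinants `Δ n` of the leading `n × n` blocks of a
tridiagonal matrix obey the continuant recurrence
`Δ (n + 2) = a (n + 1) * Δ (n + 1) - b n * e (n + 1) * Δ n`.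
The sum `S n = ∑ j ≤ n, (d 0 ⋯ d (j - 1)) (c j ⋯ c (n - 1))` obeys
`S (n + 1) = S n * c n + d 0 ⋯ d n`;
eliminating `d 0 ⋯ d n` between two consecutive instances gives the same recurrence for `S`,
and the initial values `1` and `d 0 + c 0` agree.
-/

open Finset Matrix

section Tridiag

variable {R : Type*} [CommRing R] (a b e : ℕ → R)

def tridiag (n : ℕ) : Matrix (Fin n) (Fin n) R :=
  of fun i j =>
    if i = j then a i
    else if (j : ℕ) = i + 1 then b i
    else if (i : ℕ) = j + 1 then e i
    else 0

section Entries

variable {a b e} {n : ℕ} {i j : Fin n}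

theorem tridiag_apply_self : tridiag a b e n i i = a i := if_pos rfl

theorem tridiag_apply_of_val_eq_add_one_left (h : (j : ℕ) = i + 1) :
    tridiag a b e n i j = b i := by
  simp only [tridiag, of_apply, Fin.ext_iff]
  rw [if_neg (by omega), if_pos h]

theorem tridiag_apply_of_val_eq_add_one_right (h : (i : ℕ) = j + 1) :
    tridiag a b e n i j = e i := by
  simp only [tridiag, of_apply, Fin.ext_iff]
  rw [if_neg (by omega), if_neg (by omega), if_pos h]

theorem tridiag_apply_eq_zero (h : (i : ℕ) + 1 < j ∨ (j : ℕ) + 1 < i) :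
    tridiag a b e n i j = 0 := by
  simp only [tridiag, of_apply, Fin.ext_iff]
  rw [if_neg, if_neg, if_neg] <;> omega

end Entries

theorem tridiag_submatrix_castSucc (n : ℕ) :
    (tridiag a b e (n + 1)).submatrix Fin.castSucc Fin.castSucc = tridiag a b e n := by
  ext i j
  simp [tridiag, Fin.castSucc_inj]

theorem det_tridiag_submatrix_castSucc_succAbove (n : ℕ) :
    ((tridiag a b e (n + 2)).submatrix Fin.castSucc (Fin.last n).castSucc.succAbove).det
      = b n * (tridiag a b e n).det := by
  rw [det_succ_column _ (Fin.last _), Fin.sum_univ_castSucc, sum_eq_zero, zero_add]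
  · have hminor : ((tridiag a b e (n + 2)).submatrix Fin.castSucc
        (Fin.last n).castSucc.succAbove).submatrix Fin.castSucc Fin.castSucc
          = tridiag a b e n := by
      ext i j
      simp [tridiag, Fin.succAbove_castSucc_of_lt _ _ (Fin.castSucc_lt_last j)]
    rw [Fin.succAbove_last, hminor, submatrix_apply, tridiag_apply_of_val_eq_add_one_left (by simp)]
    simp
  · intro i _
    rw [submatrix_apply, tridiag_apply_eq_zero (by simp), mul_zero, zero_mul]

theorem det_tridiag_succ_succ (n : ℕ) :
    (tridiag a b e (n + 2)).det
      = a (n + 1) * (tridiag a b e (n + 1)).det - b n * e (n + 1) * (tridiag a b e n).det := by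
  rw [det_succ_row _ (Fin.last _), Fin.sum_univ_castSucc, Fin.sum_univ_castSucc, sum_eq_zero,
    zero_add]
  · rw [tridiag_apply_of_val_eq_add_one_right (by simp), tridiag_apply_self, Fin.succAbove_last,
      tridiag_submatrix_castSucc, det_tridiag_submatrix_castSucc_succAbove]
    simp only [Fin.val_last, Fin.val_castSucc, odd_add_one_self, Odd.neg_one_pow, Even.add_self,
      Even.neg_pow, one_pow]
    ring
  · intro j _
    rw [tridiag_apply_eq_zero (by simp), mul_zero, zero_mul]

end Tridiag

section PrefixSuffixSum

variable {R : Type*} [CommRing R] (d c : ℕ → R)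

def prefixSuffixSum (n : ℕ) : R :=
  ∑ j ∈ range (n + 1), (∏ i ∈ range j, d i) * ∏ i ∈ Ico j n, c i

theorem prefixSuffixSum_succ (n : ℕ) :
    prefixSuffixSum d c (n + 1) = prefixSuffixSum d c n * c n + ∏ i ∈ range (n + 1), d i := by
  rw [prefixSuffixSum, sum_range_succ, Ico_self, prod_empty, mul_one, prefixSuffixSum, sum_mul]
  congr 1
  refine sum_congr rfl fun j hj => ?_
  rw [prod_Ico_succ_top (Nat.lt_succ_iff.mp (mem_range.mp hj)), mul_assoc]

theorem prefixSuffixSum_succ_succ (n : ℕ) :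
    prefixSuffixSum d c (n + 2)
      = (d (n + 1) + c (n + 1)) * prefixSuffixSum d c (n + 1)
        - c n * d (n + 1) * prefixSuffixSum d c n := by
  rw [prefixSuffixSum_succ d c (n + 1), prefixSuffixSum_succ d c n, prod_range_succ _ (n + 1)]
  ring

theorem det_tridiag_eq_prefixSuffixSum (n : ℕ) :
    (tridiag (fun i => d i + c i) (fun i => -c i) (fun i => -d i) n).det
      = prefixSuffixSum d c n := by
  induction n using Nat.twoStepInduction with
  | zero => simp [prefixSuffixSum]
  | one => simp [tridiag_apply_self, prefixSuffixSum, sum_range_succ, add_comm]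
  | more n ih ih' =>
    rw [det_tridiag_succ_succ, ih, ih', prefixSuffixSum_succ_succ]
    ring

end PrefixSuffixSum

theorem Fin.prod_univ_filter_val {M : Type*} [CommMonoid M] (n : ℕ) (p : ℕ → Prop)
    [DecidablePred p] (f : ℕ → M) :
    ∏ i ∈ univ.filter (fun i : Fin n => p i), f i = ∏ i ∈ (range n).filter p, f i := by
  rw [prod_filter, prod_filter, Fin.prod_univ_eq_prod_range (fun i => if p i then f i else 1)]

/-- Determinant of the tridiagonal matrix with diagonal `d k + c k`, superdiagonal `-c k`
(in row `k`), and subdiagonal `-d (k+1)` (in row `k+1`):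
`D_n = Σ_{j=0}^{n} (d_0 ⋯ d_{j-1})(c_j ⋯ c_{n-1})` (0-based indexing). -/
theorem stmt_2 {R : Type*} [CommRing R] (n : ℕ) (c d : Fin n → R) :
    (Matrix.of fun k j : Fin n =>
        if k = j then d k + c k
        else if (j : ℕ) = (k : ℕ) + 1 then -c k
        else if (k : ℕ) = (j : ℕ) + 1 then -d k
        else 0).det
      = ∑ j ∈ Finset.range (n + 1),
          (∏ i ∈ Finset.univ.filter (fun i : Fin n => (i : ℕ) < j), d i) *
          (∏ i ∈ Finset.univ.filter (fun i : Fin n => j ≤ (i : ℕ)), c i) := by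
  have extend (f : Fin n → R) : ∃ g : ℕ → R, f = fun i : Fin n => g i :=
    ⟨fun i => if h : i < n then f ⟨i, h⟩ else 0, by simp⟩
  obtain ⟨C, rfl⟩ := extend c
  obtain ⟨D, rfl⟩ := extend d
  change (tridiag (fun i => D i + C i) (fun i => -C i) (fun i => -D i) n).det = _
  rw [det_tridiag_eq_prefixSuffixSum]
  refine sum_congr rfl fun j hj => ?_
  have hjn : j ≤ n := Nat.lt_succ_iff.mp (mem_range.mp hj)
  rw [Fin.prod_univ_filter_val n (· < j), Fin.prod_univ_filter_val n (j ≤ ·)]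
  simp only [range_eq_Ico, Ico_filter_lt_of_le_right hjn, Ico_filter_le_of_left_le (Nat.zero_le j)]
end

section
/- For the characteristic polynomial P₀(ν) (i.e., φ = 0), the constant term and the coefficient of ν both vanish; in other words, ν² divides P₀(ν). -/
/-!
Each row of the flock matrix sums to `ν²`, because the three polynomials `ψ₋₁, ψ₀, ψ₁` of a
row sum to zero. Adding all columns to the first one therefore turns it into `ν² • 1`, so
`P₀(ν) = ν² Q(ν)` with `Q` the (continuous) determinant of the matrix whose first column is
replaced by ones.
-/

open Filter Topology Matrix

namespace Matrix

variable {n R : Type*} [Fintype n] [DecidableEq n] [CommRing R]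

theorem det_eq_mul_det_updateCol_one_of_mulVec_one {A : Matrix n n R} {c : R}
    (hA : A *ᵥ 1 = c • 1) (j : n) : A.det = c * (A.updateCol j 1).det := by
  have hcol : (fun k => ∑ i, (1 : n → R) i • A k i) = c • (1 : n → R) := by
    ext k
    simpa [mulVec, dotProduct] using congrFun hA k
  have := det_updateCol_sum A j 1
  rwa [hcol, det_updateCol_smul, Pi.one_apply, one_smul, eq_comm] at this

end Matrix

/-- Indexing by `ZMod p` makes `α ± 1` wrap around, which produces the two corner entries. -/
def cyclicTridiag {R : Type*} [AddCommMonoid R] (p : ℕ) (d u l : ZMod p → R) :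
    Matrix (ZMod p) (ZMod p) R :=
  Matrix.of fun α β =>
    (if β = α then d α else 0) + (if β = α + 1 then u α else 0) + (if β = α - 1 then l α else 0)

theorem cyclicTridiag_mulVec_one {R : Type*} [CommRing R] (p : ℕ) [NeZero p]
    (d u l : ZMod p → R) : cyclicTridiag p d u l *ᵥ 1 = d + u + l := by
  ext α
  simp [cyclicTridiag, mulVec, dotProduct, Finset.sum_add_distrib]

theorem Continuous.cyclicTridiag {X R : Type*} [TopologicalSpace X] [TopologicalSpace R]
    [AddCommMonoid R] [ContinuousAdd R] {p : ℕ} {d u l : X → ZMod p → R}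
    (hd : ∀ α, Continuous (d · α)) (hu : ∀ α, Continuous (u · α))
    (hl : ∀ α, Continuous (l · α)) :
    Continuous fun x => cyclicTridiag p (d x) (u x) (l x) := by
  refine continuous_matrix fun α β => ?_
  unfold _root_.cyclicTridiag
  simp only [of_apply]
  split_ifs <;> fun_prop

theorem hasDerivAt_sq_mul_zero {𝕜 : Type*} [NontriviallyNormedField 𝕜] {g : 𝕜 → 𝕜}
    (hg : ContinuousAt g 0) : HasDerivAt (fun x => x ^ 2 * g x) 0 0 := by
  rw [hasDerivAt_iff_tendsto_slope_zero]
  have hlim : Tendsto (fun t : 𝕜 => t * g t) (𝓝 0) (𝓝 0) := by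
    simpa using tendsto_id.mul hg
  refine (hlim.mono_left nhdsWithin_le_nhds).congr' ?_
  filter_upwards [self_mem_nhdsWithin] with t (ht : t ≠ 0)
  simp only [zero_add, smul_eq_mul]
  field_simp
  ring

/-- For the characteristic polynomial `P₀(ν)` (the case `φ = 0`) of the nearest-neighbor
flock model, the constant term and the coefficient of `ν` both vanish:
`P₀(0) = 0` and `P₀'(0) = 0`. -/
theorem stmt_8 (p : ℕ) [NeZero p]
    (gx gv ρx1 ρxm ρv1 ρvm : ZMod p → ℝ)
    (hx : ∀ α, ρxm α + 1 + ρx1 α = 0)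
    (hv : ∀ α, ρvm α + 1 + ρv1 α = 0) :
    let ψ0 : ZMod p → ℂ → ℂ := fun α ν => (gv α : ℂ) * ν + (gx α : ℂ)
    let ψ1 : ZMod p → ℂ → ℂ := fun α ν => (gv α : ℂ) * (ρv1 α : ℂ) * ν + (gx α : ℂ) * (ρx1 α : ℂ)
    let ψm : ZMod p → ℂ → ℂ := fun α ν => (gv α : ℂ) * (ρvm α : ℂ) * ν + (gx α : ℂ) * (ρxm α : ℂ)
    let P : ℂ → ℂ := fun ν =>
      (Matrix.of fun α β : ZMod p =>
          (if β = α then ν ^ 2 + ψ0 α ν else 0) +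
          (if β = α + 1 then ψ1 α ν else 0) +
          (if β = α - 1 then ψm α ν else 0)).det
    P 0 = 0 ∧ deriv P 0 = 0 := by
  intro ψ0 ψ1 ψm P
  let M : ℂ → Matrix (ZMod p) (ZMod p) ℂ := fun ν =>
    cyclicTridiag p (fun α => ν ^ 2 + ψ0 α ν) (ψ1 · ν) (ψm · ν)
  have hrow : ∀ ν, M ν *ᵥ 1 = ν ^ 2 • 1 := fun ν => by
    rw [cyclicTridiag_mulVec_one]
    ext α
    have hx' : (ρxm α : ℂ) + 1 + ρx1 α = 0 := by exact_mod_cast hx α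
    have hv' : (ρvm α : ℂ) + 1 + ρv1 α = 0 := by exact_mod_cast hv α
    simp only [Pi.add_apply, Pi.smul_apply, Pi.one_apply, smul_eq_mul, mul_one, ψ0, ψ1, ψm]
    linear_combination (gv α : ℂ) * ν * hv' + (gx α : ℂ) * hx'
  have hP : P = fun ν => ν ^ 2 * ((M ν).updateCol 0 1).det :=
    funext fun ν => Matrix.det_eq_mul_det_updateCol_one_of_mulVec_one (hrow ν) 0
  have hM : Continuous M :=
    Continuous.cyclicTridiag (fun _ => by fun_prop) (fun _ => by fun_prop) (fun _ => by fun_prop)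
  have hQ : Continuous fun ν => ((M ν).updateCol 0 1).det :=
    (hM.matrix_updateCol 0 continuous_const).matrix_det
  rw [hP]
  exact ⟨by simp, (hasDerivAt_sq_mul_zero hQ.continuousAt).deriv⟩
end

section
/- With g_x^{(α)}, g_v^{(α)} > 0 and a_{02}, a_{12}, a_{20}, a_{30} as given (a_{02} = 2^{-p}∏g_x; a_{12} = 2^{-p}∏g_x·Σ g_v/g_x; a_{20} = (p/2^{p-1})∏g_x·Σ 1/g_x; a_{30} = (2p/2^p)∏g_x·(Σ 1/g_x · Σ g_v/g_x − Σ g_v/(g_x)²)), one has (a_{30}a_{02} − a_{12}a_{20})/a_{20}² = −Avg(g_v^{(k)}/(g_x^{(k)})²) / (2p²·Avg(1/g_x^{(k)})²), which is strictly negative. -/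
/-!
Write `P = ∏ g_x`, `S₁ = Σ 1/g_x`, `S₂ = Σ g_v/g_x`, `S₃ = Σ g_v/g_x²`. Since `p/2^(p-1) = 2p/2^p`,
the mixed terms `S₁S₂` of `a₃₀a₀₂` and `a₁₂a₂₀` cancel, leaving `-(2p/4^p) P² S₃` over
`a₂₀² = (2p/2^p)² P² S₁²`, i.e. `-S₃/(2p S₁²)`; this is negative because `g_x, g_v > 0`.
-/

open Finset

lemma div_two_pow_pred {p : ℕ} (hp : 1 ≤ p) (x : ℝ) : x / 2 ^ (p - 1) = 2 * x / 2 ^ p := by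
  rw [← Nat.sub_add_cancel hp, pow_succ, Nat.add_sub_cancel]
  field_simp

lemma second_order_ratio_eq {c q P S₁ S₂ S₃ : ℝ} (hc : c ≠ 0) (hq : q ≠ 0) (hP : P ≠ 0)
    (hS₁ : S₁ ≠ 0) :
    ((2 * q / c) * P * (S₁ * S₂ - S₃) * (c⁻¹ * P) - (c⁻¹ * P * S₂) * ((2 * q / c) * P * S₁))
        / ((2 * q / c) * P * S₁) ^ 2
      = -((1 / q * S₃) / (2 * q ^ 2 * (1 / q * S₁) ^ 2)) := by
  field_simp
  ring

/-- With `g_x, g_v > 0` and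
`a_{02} = 2^{-p} ∏ g_x`, `a_{12} = 2^{-p} (∏ g_x)(Σ g_v/g_x)`,
`a_{20} = (p/2^{p-1}) (∏ g_x)(Σ 1/g_x)`,
`a_{30} = (2p/2^p) (∏ g_x)((Σ 1/g_x)(Σ g_v/g_x) − Σ g_v/g_x²)`, one has
`(a_{30}a_{02} − a_{12}a_{20})/a_{20}² = −Avg(g_v/g_x²)/(2p² Avg(1/g_x)²) < 0`. -/
theorem stmt_16 (p : ℕ) (hp : 1 ≤ p) (gx gv : Fin p → ℝ)
    (hgx : ∀ k, 0 < gx k) (hgv : ∀ k, 0 < gv k)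
    (a02 a12 a20 a30 : ℝ)
    (h02 : a02 = ((2 : ℝ) ^ p)⁻¹ * ∏ k, gx k)
    (h12 : a12 = ((2 : ℝ) ^ p)⁻¹ * (∏ k, gx k) * ∑ k, gv k / gx k)
    (h20 : a20 = ((p : ℝ) / 2 ^ (p - 1)) * (∏ k, gx k) * ∑ k, (gx k)⁻¹)
    (h30 : a30 = (2 * (p : ℝ) / 2 ^ p) * (∏ k, gx k) *
        ((∑ k, (gx k)⁻¹) * (∑ k, gv k / gx k) - ∑ k, gv k / (gx k) ^ 2)) :
    (a30 * a02 - a12 * a20) / a20 ^ 2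
        = -(((1 / (p : ℝ)) * ∑ k, gv k / (gx k) ^ 2) /
            (2 * (p : ℝ) ^ 2 * ((1 / (p : ℝ)) * ∑ k, (gx k)⁻¹) ^ 2)) ∧
    (a30 * a02 - a12 * a20) / a20 ^ 2 < 0 := by
  have : Nonempty (Fin p) := Fin.pos_iff_nonempty.mp hp
  have hq : (0 : ℝ) < p := by exact_mod_cast hp
  have hP : 0 < ∏ k, gx k := prod_pos fun k _ ↦ hgx k
  have hS₁ : 0 < ∑ k, (gx k)⁻¹ := sum_pos (fun k _ ↦ inv_pos.mpr (hgx k)) univ_nonempty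
  have hS₃ : 0 < ∑ k, gv k / gx k ^ 2 :=
    sum_pos (fun k _ ↦ div_pos (hgv k) (pow_pos (hgx k) 2)) univ_nonempty
  have hratio : (a30 * a02 - a12 * a20) / a20 ^ 2
      = -(((1 / (p : ℝ)) * ∑ k, gv k / (gx k) ^ 2) /
          (2 * (p : ℝ) ^ 2 * ((1 / (p : ℝ)) * ∑ k, (gx k)⁻¹) ^ 2)) := by
    rw [h02, h12, h20, h30, div_two_pow_pred hp]
    exact second_order_ratio_eq (by positivity) hq.ne' hP.ne' hS₁.ne'
  exact ⟨hratio, hratio ▸ neg_neg_of_pos (by positivity)⟩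
end

section
/- Let L be a real symmetric negative semidefinite n×n matrix and α > 0. Then every eigenvalue ν of the 2n×2n block matrix [[0, I],[L, αL]] satisfies Re(ν) ≤ 0. Moreover each such eigenvalue is of the form ν = (αλ)/2 ± √(α²λ²/4 + λ) for some eigenvalue λ ≤ 0 of L. -/
/-!
An eigenvector `(x, y)` of `[[0, I], [L, αL]]` for `ν` has `y = ν x` and `(1 + αν) L x = ν² x`,
so `1 + αν ≠ 0` and `x` is an eigenvector of `L` for `λ = ν² / (1 + αν)`. As `L` is symmetric
negative semidefinite, `λ` is real and `λ ≤ 0`, and `ν` solves `(ν - αλ/2)² = α²λ²/4 + λ`.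
The right-hand side is real and at most `(αλ/2)²`, so `ν - αλ/2` is either purely imaginary or
real of modulus at most `|αλ/2|`; either way `Re ν ≤ 0`.
-/

open Matrix

namespace Matrix

variable {m K : Type*} [Fintype m] [DecidableEq m] [Field K]

theorem mem_spectrum_iff_exists_mulVec_eq_smul {A : Matrix m m K} {μ : K} :
    μ ∈ spectrum K A ↔ ∃ v ≠ 0, A *ᵥ v = μ • v := by
  rw [spectrum.mem_iff, isUnit_iff_isUnit_det, isUnit_iff_ne_zero, not_not,
    ← exists_mulVec_eq_zero_iff]
  simp only [sub_mulVec, Algebra.algebraMap_eq_smul_one, smul_mulVec, one_mulVec, sub_eq_zero,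
    eq_comm]

theorem fromBlocks_zero_one_mulVec_sumElim_eq_smul_iff {A B : Matrix m m K} {ν : K}
    {x y : m → K} :
    fromBlocks 0 1 A B *ᵥ Sum.elim x y = ν • Sum.elim x y ↔
      y = ν • x ∧ A *ᵥ x + B *ᵥ y = ν • y := by
  simp [fromBlocks_mulVec, funext_iff, Sum.forall]

theorem exists_mem_spectrum_of_mem_spectrum_fromBlocks {A : Matrix m m K} {α ν : K}
    (hν : ν ∈ spectrum K (fromBlocks 0 (1 : Matrix m m K) A (α • A))) :
    ∃ μ ∈ spectrum K A, ν ^ 2 = α * μ * ν + μ := by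
  obtain ⟨v, hv0, hv⟩ := mem_spectrum_iff_exists_mulVec_eq_smul.mp hν
  obtain ⟨x, y, rfl⟩ : ∃ x y, v = Sum.elim x y := ⟨_, _, (Sum.elim_comp_inl_inr v).symm⟩
  obtain ⟨rfl, hx⟩ := fromBlocks_zero_one_mulVec_sumElim_eq_smul_iff.mp hv
  have hx0 : x ≠ 0 := by rintro rfl; simp at hv0
  replace hx : (1 + α * ν) • (A *ᵥ x) = ν ^ 2 • x := by
    rw [smul_mulVec, mulVec_smul] at hx
    linear_combination (norm := module) hx
  have hden : 1 + α * ν ≠ 0 := by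
    intro h
    have hν0 : ν = 0 := by simpa [h, hx0] using hx.symm
    simp [hν0] at h
  refine ⟨ν ^ 2 / (1 + α * ν), mem_spectrum_iff_exists_mulVec_eq_smul.mpr ⟨x, hx0, ?_⟩, ?_⟩
  · rw [div_eq_inv_mul, mul_smul, ← hx, smul_smul, inv_mul_cancel₀ hden, one_smul]
  · linear_combination -(div_mul_cancel₀ (ν ^ 2) hden)

theorem IsSymm.exists_eq_ofReal_of_mem_spectrum {L : Matrix m m ℝ} (hL : L.IsSymm) {μ : ℂ}
    (hμ : μ ∈ spectrum ℂ (L.map Complex.ofReal)) : ∃ r ∈ spectrum ℝ L, μ = r := by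
  have hH : (L.map Complex.ofReal).IsHermitian :=
    (isHermitian_iff_isSymm.mpr hL).map _ fun r => by simp
  obtain ⟨r, -, rfl⟩ := by simpa only [hH.spectrum_eq_image_range] using hμ
  refine ⟨r, AlgHom.spectrum_apply_subset Complex.ofRealAm.mapMatrix L ?_, rfl⟩
  exact (spectrum.algebraMap_mem_iff ℂ).mp hμ

open scoped ComplexOrder in
theorem PosSemidef.nonpos_of_mem_spectrum_neg {𝕜 : Type*} [RCLike 𝕜] {A : Matrix m m 𝕜}
    (hA : (-A).PosSemidef) {μ : 𝕜} (hμ : μ ∈ spectrum 𝕜 A) : μ ≤ 0 := by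
  have : -μ ∈ spectrum 𝕜 (-A) := by rw [← spectrum.neg_eq]; simpa using hμ
  simpa using (posSemidef_iff_isHermitian_and_spectrum_nonneg.mp hA).2 this

end Matrix

namespace Complex

theorem re_nonpos_of_sub_sq_eq_ofReal {a D : ℝ} {z : ℂ} (ha : a ≤ 0) (hD : D ≤ a ^ 2)
    (h : (z - a) ^ 2 = D) : z.re ≤ 0 := by
  have hre := congrArg re h
  have him := congrArg im h
  simp only [sq, mul_re, mul_im, sub_re, sub_im, ofReal_re, ofReal_im, sub_zero] at hre him
  rcases mul_eq_zero.mp (show (z.re - a) * z.im = 0 by linarith) with hp | hq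
  · linarith [sub_eq_zero.mp hp]
  · rw [hq] at hre
    nlinarith

theorem eq_add_or_eq_sub_cpow_half_of_sub_sq_eq {a D z : ℂ} (h : (z - a) ^ 2 = D) :
    z = a + D ^ (1 / 2 : ℂ) ∨ z = a - D ^ (1 / 2 : ℂ) := by
  have hD : (D ^ (1 / 2 : ℂ)) ^ 2 = D := by
    simpa only [one_div] using cpow_ofNat_inv_pow D 2
  rcases sq_eq_sq_iff_eq_or_eq_neg.mp (h.trans hD.symm) with h' | h'
  · left; linear_combination h'
  · right; linear_combination h'

end Complex

/-- Let `L` be a real symmetric negative semidefinite matrix and `α > 0`. Every eigenvalue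
`ν` of the block matrix `[[0, I], [L, αL]]` satisfies `Re ν ≤ 0`, and is of the form
`ν = αλ/2 ± √(α²λ²/4 + λ)` for some eigenvalue `λ ≤ 0` of `L`. -/
theorem stmt_17 {n : ℕ} (L : Matrix (Fin n) (Fin n) ℝ) (α : ℝ)
    (hL : L.IsSymm) (hneg : (-L).PosSemidef) (hα : 0 < α) :
    ∀ ν ∈ spectrum ℂ
        ((Matrix.fromBlocks (0 : Matrix (Fin n) (Fin n) ℝ)
            (1 : Matrix (Fin n) (Fin n) ℝ) L (α • L)).map (Complex.ofReal)),
      ν.re ≤ 0 ∧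
      ∃ lam : ℝ, lam ∈ spectrum ℝ L ∧ lam ≤ 0 ∧
        (ν = (α * lam) / 2 + ((α ^ 2 * lam ^ 2 / 4 + lam : ℝ) : ℂ) ^ ((1 : ℂ) / 2) ∨
         ν = (α * lam) / 2 - ((α ^ 2 * lam ^ 2 / 4 + lam : ℝ) : ℂ) ^ ((1 : ℂ) / 2)) := by
  intro ν hν
  have hmap : (fromBlocks 0 (1 : Matrix (Fin n) (Fin n) ℝ) L (α • L)).map Complex.ofReal =
      fromBlocks 0 1 (L.map Complex.ofReal) ((α : ℂ) • L.map Complex.ofReal) := by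
    simp [fromBlocks_map, Matrix.map_smul]
  rw [hmap] at hν
  obtain ⟨μ, hμ, hquad⟩ := exists_mem_spectrum_of_mem_spectrum_fromBlocks hν
  obtain ⟨lam, hlam, rfl⟩ := hL.exists_eq_ofReal_of_mem_spectrum hμ
  have hlam0 : lam ≤ 0 := hneg.nonpos_of_mem_spectrum_neg hlam
  have hsq : (ν - (α * lam / 2 : ℝ)) ^ 2 = (α ^ 2 * lam ^ 2 / 4 + lam : ℝ) := by
    push_cast
    linear_combination hquad
  refine ⟨Complex.re_nonpos_of_sub_sq_eq_ofReal ?_ ?_ hsq, lam, hlam, hlam0, ?_⟩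
  · nlinarith
  · nlinarith
  · simpa using Complex.eq_add_or_eq_sub_cpow_half_of_sub_sq_eq hsq
end
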